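/- Let G = GLS(A,k,B) be a GLS block graph built from positive integers n ≥ 1, k with 1 ≤ k ≤ n, B, and A = (a_1, …, a_n) with 1 ≤ a_i ≤ B and a_1 + ⋯ + a_n = kB. Suppose that no proper (k+2)-coloring of G that maximizes the product of the sizes of its color classes is equitable. Then there exists a proper (k+2)-coloring of G maximizing this product, together with two colors i and j whose class sizes differ by at least 2, such that the subgraph of G induced by the union of color classes i and j is a disjoint union of stars (i.e., every connected component of this induced subgraph contains a vertex adjacent to all other vertices of that component). -/
import Mathlib


open scoped BigOperators

namespace BlockGraphPaper

variable {V : Type*}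

/-- `S` is an independent set of the graph `G`. -/
def IsIndepSet (G : SimpleGraph V) (S : Set V) : Prop :=
  S.Pairwise fun u v => ¬ G.Adj u v

/-- The independence number `α(G)`: the largest size of an independent set. -/
noncomputable def alpha (G : SimpleGraph V) : ℕ :=
  sSup {n | ∃ S : Set V, IsIndepSet G S ∧ S.ncard = n}

/-- `α(G,v)`: the largest size of an independent set containing the vertex `v`. -/
noncomputable def alphaAt (G : SimpleGraph V) (v : V) : ℕ :=
  sSup {n | ∃ S : Set V, IsIndepSet G S ∧ v ∈ S ∧ S.ncard = n}

/-- `α_min(G) = min over vertices v of α(G,v)`. -/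
noncomputable def alphaMin (G : SimpleGraph V) : ℕ :=
  ⨅ v : V, alphaAt G v

/-- The clique number `ω(G)`: the largest size of a clique. -/
noncomputable def cliqueNum (G : SimpleGraph V) : ℕ :=
  sSup {n | ∃ S : Set V, G.IsClique S ∧ S.ncard = n}

/-- A set of vertices is 2-connected if it has at least 3 vertices, induces a
connected subgraph, and removal of any of its vertices keeps it connected
(i.e. it has no cut vertex). -/
def IsTwoConnectedSet (G : SimpleGraph V) (S : Set V) : Prop :=
  3 ≤ S.ncard ∧ (G.induce S).Connected ∧ ∀ v ∈ S, (G.induce (S \ {v})).Connected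

/-- A block graph: every block (maximal 2-connected subgraph) is a clique;
equivalently, every 2-connected set of vertices is a clique. -/
def IsBlockGraph (G : SimpleGraph V) : Prop :=
  ∀ S : Set V, IsTwoConnectedSet G S → G.IsClique S

/-- A vertex is simplicial if its neighborhood is a clique. -/
def IsSimplicial (G : SimpleGraph V) (w : V) : Prop :=
  G.IsClique (G.neighborSet w)

/-- A vertex is a cut vertex if its removal increases the number of
connected components. -/
def IsCutVertex (G : SimpleGraph V) (v : V) : Prop :=
  Nat.card G.ConnectedComponent < Nat.card (G.induce ({v}ᶜ : Set V)).ConnectedComponent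

/-- A cluster graph: a disjoint union of complete graphs, i.e. every
connected component is a clique. -/
def IsClusterGraph (G : SimpleGraph V) : Prop :=
  ∀ u v : V, G.Reachable u v → u = v ∨ G.Adj u v

/-- The distance to cluster `dc(G)`: the least number of vertices whose removal
yields a cluster graph. -/
noncomputable def dc (G : SimpleGraph V) : ℕ :=
  sInf {n | ∃ D : Set V, D.ncard = n ∧ IsClusterGraph (G.induce (Dᶜ : Set V))}

/-- A proper coloring of `G` with colors in `Fin k`. -/
def IsProperColoring (G : SimpleGraph V) {k : ℕ} (c : V → Fin k) : Prop :=
  ∀ u v : V, G.Adj u v → c u ≠ c v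

/-- An equitable `k`-coloring: a proper coloring whose color classes differ
in size by at most one. -/
def IsEquitableColoring (G : SimpleGraph V) {k : ℕ} (c : V → Fin k) : Prop :=
  IsProperColoring G c ∧
    ∀ i j : Fin k, {v | c v = i}.ncard ≤ {v | c v = j}.ncard + 1

/-- The equitable chromatic number `χ₌(G)`: the least `k` admitting an
equitable `k`-coloring. -/
noncomputable def eqChromNum (G : SimpleGraph V) : ℕ :=
  sInf {k : ℕ | ∃ c : V → Fin k, IsEquitableColoring G c}

/-- A maximal clique of a graph. -/
def IsMaximalClique (G : SimpleGraph V) (Q : Set V) : Prop :=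
  G.IsClique Q ∧ ∀ R : Set V, G.IsClique R → Q ⊆ R → Q = R

/-- A pendant clique of a block graph: a maximal clique containing exactly one
cut vertex. -/
def IsPendantClique (G : SimpleGraph V) (Q : Set V) : Prop :=
  IsMaximalClique G Q ∧ ∃! y, y ∈ Q ∧ IsCutVertex G y

/-- The closed neighborhood `N[x]` of a vertex. -/
def closedNbhd (G : SimpleGraph V) (x : V) : Set V :=
  insert x (G.neighborSet x)

/-- An AIS vertex: a vertex belonging to every maximum independent set. -/
def IsAIS (G : SimpleGraph V) (w : V) : Prop :=
  ∀ S : Set V, IsIndepSet G S → S.ncard = alpha G → w ∈ S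

/-- A graph is a disjoint union of stars if every connected component has a
vertex adjacent to all other vertices of the component. -/
def IsDisjointUnionOfStars (G : SimpleGraph V) : Prop :=
  ∀ comp : G.ConnectedComponent, ∃ u : V, G.connectedComponentMk u = comp ∧
    ∀ w : V, G.connectedComponentMk w = comp → w ≠ u → G.Adj u w

/-- The parameter sequence of a GLS block graph: flower `0` has parameter `B`
and flower `i+1` has parameter `a i`. -/
def glsPar (n B : ℕ) (a : Fin n → ℕ) : Fin (n + 1) → ℕ :=
  Fin.cases B a

/-- The vertex set of the GLS block graph `GLS(A,k,B)`: for each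
`i : Fin (n+1)`, the flower `F(par i, k+1)` consists of a universal vertex
(`none`) together with `par i + 1` disjoint copies of `K_k`
(vertex `some (c, p)` is vertex `p` of copy `c`). -/
abbrev GLSV (n k B : ℕ) (a : Fin n → ℕ) : Type :=
  Σ i : Fin (n + 1), Option (Fin (glsPar n B a i + 1) × Fin k)

/-- The GLS block graph `GLS(A,k,B)`: inside each flower the universal vertex
`⟨i, none⟩ = y_i` is joined to all other vertices of the flower and two
non-universal vertices are adjacent iff they lie in the same copy of `K_k`;
moreover `y_0` is joined to each `y_j`, `j = 1, …, n`. -/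
def GLSGraph (n k B : ℕ) (a : Fin n → ℕ) : SimpleGraph (GLSV n k B a) :=
  SimpleGraph.fromRel (fun u v =>
    (u.1 = v.1 ∧ (u.2 = none ∨ v.2 = none ∨
      ∃ c : ℕ, u.2.map (fun p => (p.1 : ℕ)) = some c ∧
               v.2.map (fun p => (p.1 : ℕ)) = some c)) ∨
    (u.2 = none ∧ v.2 = none ∧ (u.1 = 0 ∨ v.1 = 0)))

/-- The universal vertex `y_i` of the `i`-th flower of a GLS block graph. -/
def glsY (n k B : ℕ) (a : Fin n → ℕ) (i : Fin (n + 1)) : GLSV n k B a :=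
  ⟨i, none⟩

/-- The graph `H` obtained from the GLS block graph by joining all the
universal vertices `y_0, y_1, …, y_n` into a clique. -/
def GLSPlus (n k B : ℕ) (a : Fin n → ℕ) : SimpleGraph (GLSV n k B a) :=
  GLSGraph n k B a ⊔ SimpleGraph.fromRel (fun u v => u.2 = none ∧ v.2 = none)


section Helpers

variable {n k B : ℕ} {a : Fin n → ℕ}

lemma gls_adj_iff (u v : GLSV n k B a) :
    (GLSGraph n k B a).Adj u v ↔ u ≠ v ∧
      ((u.1 = v.1 ∧ (u.2 = none ∨ v.2 = none ∨
        ∃ c : ℕ, u.2.map (fun p => (p.1 : ℕ)) = some c ∧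
                 v.2.map (fun p => (p.1 : ℕ)) = some c)) ∨
       (u.2 = none ∧ v.2 = none ∧ (u.1 = 0 ∨ v.1 = 0))) := by
  rw [GLSGraph, SimpleGraph.fromRel_adj]
  constructor
  · rintro ⟨hne, h | h⟩
    · exact ⟨hne, h⟩
    · refine ⟨hne, ?_⟩
      rcases h with ⟨h1, h2⟩ | ⟨h1, h2, h3⟩
      · exact Or.inl ⟨h1.symm, by tauto⟩
      · exact Or.inr ⟨h2, h1, by tauto⟩
  · rintro ⟨hne, h⟩
    exact ⟨hne, Or.inl h⟩

lemma adj_y_copy (t : Fin (n+1)) (x : Fin (glsPar n B a t + 1) × Fin k) :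
    (GLSGraph n k B a).Adj ⟨t, none⟩ ⟨t, some x⟩ := by
  rw [gls_adj_iff]
  refine ⟨by simp, Or.inl ⟨rfl, Or.inl rfl⟩⟩

lemma adj_y0_y (t : Fin (n+1)) (ht : t ≠ 0) :
    (GLSGraph n k B a).Adj ⟨0, none⟩ ⟨t, none⟩ := by
  rw [gls_adj_iff]
  refine ⟨?_, Or.inr ⟨rfl, rfl, Or.inl rfl⟩⟩
  intro h
  exact ht (congrArg Sigma.fst h).symm

lemma adj_same_copy (t : Fin (n+1)) (cp : Fin (glsPar n B a t + 1)) {p q : Fin k}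
    (hpq : p ≠ q) :
    (GLSGraph n k B a).Adj ⟨t, some (cp, p)⟩ ⟨t, some (cp, q)⟩ := by
  rw [gls_adj_iff]
  refine ⟨?_, Or.inl ⟨rfl, Or.inr (Or.inr ⟨cp.val, by simp, by simp⟩)⟩⟩
  intro h
  apply hpq
  have := (Sigma.mk.inj_iff.mp h).2
  simpa using this

/-- classification of neighbours of a copy vertex -/
lemma adj_copy_cases {t : Fin (n+1)} {cp : Fin (glsPar n B a t + 1)} {p : Fin k}
    {w : GLSV n k B a}
    (h : (GLSGraph n k B a).Adj ⟨t, some (cp, p)⟩ w) :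
    w = ⟨t, none⟩ ∨ ∃ q : Fin k, q ≠ p ∧ w = ⟨t, some (cp, q)⟩ := by
  rw [gls_adj_iff] at h
  obtain ⟨hne, h | h⟩ := h
  · obtain ⟨t', o⟩ := w
    obtain ⟨h1, h2⟩ := h
    simp only at h1
    subst h1
    rcases o with _ | ⟨cp', q⟩
    · exact Or.inl rfl
    · rcases h2 with h2 | h2 | ⟨c, hc1, hc2⟩
      · simp at h2
      · simp at h2
      · simp only [Option.map_some, Option.some.injEq] at hc1 hc2
        have hcp : cp' = cp := by
          apply Fin.ext; rw [hc2, hc1]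
        subst hcp
        refine Or.inr ⟨q, ?_, rfl⟩
        intro hq; subst hq; exact hne rfl
  · simp at h

/-- Structural lemma: if neither colour of the pair is the colour of `y₀`,
the union of the two colour classes induces a disjoint union of stars. -/
lemma gls_stars (c : GLSV n k B a → Fin (k + 2))
    (hc : IsProperColoring (GLSGraph n k B a) c) (i j : Fin (k + 2))
    (hi : c ⟨0, none⟩ ≠ i) (hj : c ⟨0, none⟩ ≠ j) :
    IsDisjointUnionOfStars
      ((GLSGraph n k B a).induce {v | c v = i ∨ c v = j}) := by
  set S : Set (GLSV n k B a) := {v | c v = i ∨ c v = j} with hS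
  set H := (GLSGraph n k B a).induce S with hH
  -- y0 is not in S
  have hy0 : (⟨0, none⟩ : GLSV n k B a) ∉ S := by
    rintro (h | h) <;> [exact hi h; exact hj h]
  have hnone_mem : ∀ x : ↥S, (x : GLSV n k B a).2 = none → (x : GLSV n k B a).1 ≠ 0 := by
    rintro ⟨⟨t, o⟩, hx⟩ h2 h1
    simp only at h2 h1
    subst h2; subst h1
    exact hy0 hx
  -- adjacency inside S preserves the flower index
  have hadjf : ∀ x y : ↥S, H.Adj x y → (x : GLSV n k B a).1 = (y : GLSV n k B a).1 := by
    intro x y hxy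
    have : (GLSGraph n k B a).Adj x.val y.val := hxy
    rw [gls_adj_iff] at this
    rcases this.2 with ⟨h1, _⟩ | ⟨h1, h2, h3 | h3⟩
    · exact h1
    · exact absurd h3 (hnone_mem x h1)
    · exact absurd h3 (hnone_mem y h2)
  have hreachf : ∀ x y : ↥S, H.Reachable x y →
      (x : GLSV n k B a).1 = (y : GLSV n k B a).1 := by
    have key : ∀ x y : ↥S, H.Walk x y → (x : GLSV n k B a).1 = (y : GLSV n k B a).1 := by
      intro x y w
      induction w with
      | nil => rfl
      | cons h p ih => exact (hadjf _ _ h).trans ih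
    exact fun x y hr => hr.elim (key x y)
  -- in a flower whose center is not in S, adjacency preserves the copy index
  have hadjc : ∀ x y : ↥S, H.Adj x y →
      (⟨(x : GLSV n k B a).1, none⟩ : GLSV n k B a) ∉ S →
      (x : GLSV n k B a).2.map (fun p => (p.1 : ℕ)) =
        (y : GLSV n k B a).2.map (fun p => (p.1 : ℕ)) := by
    intro x y hxy hyt
    have hf := hadjf x y hxy
    have : (GLSGraph n k B a).Adj x.val y.val := hxy
    rw [gls_adj_iff] at this
    rcases this.2 with ⟨h1, h2 | h2 | ⟨cc, hc1, hc2⟩⟩ | ⟨h1, h2, h3 | h3⟩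
    · -- x.2 = none : then x = ⟨x.1,none⟩ ∈ S, contradiction
      exfalso; apply hyt
      have : x.val = ⟨(x : GLSV n k B a).1, none⟩ := Sigma.ext rfl (by simp [h2])
      rw [← this]; exact x.2
    · exfalso; apply hyt
      have : y.val = ⟨(y : GLSV n k B a).1, none⟩ := Sigma.ext rfl (by simp [h2])
      rw [hf, ← this]; exact y.2
    · rw [hc1, hc2]
    · exact absurd h3 (hnone_mem x h1)
    · exact absurd h3 (hnone_mem y h2)
  have hreachc : ∀ x y : ↥S, H.Reachable x y →
      (⟨(x : GLSV n k B a).1, none⟩ : GLSV n k B a) ∉ S →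
      (x : GLSV n k B a).2.map (fun p => (p.1 : ℕ)) =
        (y : GLSV n k B a).2.map (fun p => (p.1 : ℕ)) := by
    have key : ∀ x y : ↥S, H.Walk x y →
        (⟨(x : GLSV n k B a).1, none⟩ : GLSV n k B a) ∉ S →
        (x : GLSV n k B a).2.map (fun p => (p.1 : ℕ)) =
          (y : GLSV n k B a).2.map (fun p => (p.1 : ℕ)) := by
      intro x y w
      induction w with
      | nil => exact fun _ => rfl
      | @cons u v w h p ih =>
          intro hu
          have hf := hadjf _ _ h
          exact (hadjc _ _ h hu).trans (ih (hf ▸ hu))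
    exact fun x y hr => hr.elim (key x y)
  -- now prove the star property
  intro comp
  obtain ⟨x, hx⟩ := comp.exists_rep
  obtain ⟨⟨t, o⟩, hxS⟩ := x
  rcases o with _ | ⟨cp, p⟩
  · -- x is the center y_t
    refine ⟨⟨⟨t, none⟩, hxS⟩, hx, ?_⟩
    intro w hw hwne
    have hr : H.Reachable w ⟨⟨t, none⟩, hxS⟩ :=
      SimpleGraph.ConnectedComponent.exact (hw.trans hx.symm)
    have hf := hreachf _ _ hr
    obtain ⟨⟨t', o'⟩, hwS⟩ := w
    simp only at hf
    subst hf
    rcases o' with _ | z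
    · exact absurd rfl hwne
    · exact adj_y_copy _ z
  · by_cases hyt : (⟨t, none⟩ : GLSV n k B a) ∈ S
    · -- center y_t is in S; it is the star center
      have hadj : H.Adj ⟨⟨t, none⟩, hyt⟩ ⟨⟨t, some (cp, p)⟩, hxS⟩ :=
        adj_y_copy t (cp, p)
      have hu : H.connectedComponentMk ⟨⟨t, none⟩, hyt⟩ = comp := by
        rw [← hx]
        exact SimpleGraph.ConnectedComponent.sound hadj.reachable
      refine ⟨⟨⟨t, none⟩, hyt⟩, hu, ?_⟩
      intro w hw hwne
      have hr : H.Reachable w ⟨⟨t, none⟩, hyt⟩ :=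
        SimpleGraph.ConnectedComponent.exact (hw.trans hu.symm)
      have hf := hreachf _ _ hr
      obtain ⟨⟨t', o'⟩, hwS⟩ := w
      simp only at hf
      subst hf
      rcases o' with _ | z
      · exact absurd rfl hwne
      · exact adj_y_copy _ z
    · -- component is contained in a single copy: x itself is a center
      refine ⟨⟨⟨t, some (cp, p)⟩, hxS⟩, hx, ?_⟩
      intro w hw hwne
      have hr : H.Reachable ⟨⟨t, some (cp, p)⟩, hxS⟩ w :=
        (SimpleGraph.ConnectedComponent.exact (hw.trans hx.symm)).symm
      have hf := hreachf _ _ hr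
      have hcc := hreachc _ _ hr hyt
      obtain ⟨⟨t', o'⟩, hwS⟩ := w
      simp only at hf
      subst hf
      rcases o' with _ | ⟨cp', q⟩
      · exact absurd hwS (by simpa using hyt)
      · simp only [Option.map_some, Option.some.injEq] at hcc
        have hcp : cp = cp' := by apply Fin.ext; exact hcc
        subst hcp
        have hq : p ≠ q := by
          intro h; subst h; exact hwne (by rfl)
        exact adj_same_copy _ _ hq

/-- an explicit proper coloring with all colour classes nonempty -/
def glsC0 (n k B : ℕ) (a : Fin n → ℕ) (hk : 1 ≤ k) : GLSV n k B a → Fin (k + 2) :=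
  fun v => match v with
  | ⟨t, none⟩ => if t = 0 then ⟨0, by omega⟩ else ⟨1, by omega⟩
  | ⟨_, some (_, p)⟩ => ⟨p.val + 2, by omega⟩

lemma glsC0_proper (hk : 1 ≤ k) :
    IsProperColoring (GLSGraph n k B a) (glsC0 n k B a hk) := by
  intro u v huv
  rw [gls_adj_iff] at huv
  obtain ⟨hne, h⟩ := huv
  obtain ⟨t, o⟩ := u
  obtain ⟨t', o'⟩ := v
  rcases o with _ | ⟨cp, p⟩ <;> rcases o' with _ | ⟨cp', p'⟩
  · -- both none
    have htt : t ≠ t' := by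
      intro hh; subst hh; exact hne rfl
    rcases h with ⟨h1, _⟩ | ⟨_, _, h1 | h1⟩
    · exact absurd h1 htt
    · simp only at h1
      subst h1
      simp [glsC0, htt.symm, Fin.ext_iff]
    · simp only at h1
      subst h1
      simp [glsC0, htt, Fin.ext_iff]
  · have h1 : (glsC0 n k B a hk ⟨t, none⟩).val ≤ 1 := by
      simp only [glsC0]; split <;> simp
    have h2 : (glsC0 n k B a hk ⟨t', some (cp', p')⟩).val = p'.val + 2 := rfl
    intro hcontra
    rw [Fin.ext_iff, h2] at hcontra
    omega
  · have h1 : (glsC0 n k B a hk ⟨t', none⟩).val ≤ 1 := by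
      simp only [glsC0]; split <;> simp
    have h2 : (glsC0 n k B a hk ⟨t, some (cp, p)⟩).val = p.val + 2 := rfl
    intro hcontra
    rw [Fin.ext_iff, h2] at hcontra
    omega
  · -- both some: same copy, different position
    rcases h with ⟨h1, h2 | h2 | ⟨cc, hc1, hc2⟩⟩ | ⟨h1, _⟩
    · simp at h2
    · simp at h2
    · simp only at h1
      subst h1
      simp only [Option.map_some, Option.some.injEq] at hc1 hc2
      have hcp : cp = cp' := by apply Fin.ext; rw [hc1, hc2]
      subst hcp
      have hpp : p ≠ p' := by
        intro hh; subst hh; exact hne rfl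
      simp [glsC0, Fin.ext_iff]
      omega
    · simp at h1

lemma glsC0_classes_nonempty (hn : 1 ≤ n) (hk : 1 ≤ k) (δ : Fin (k + 2)) :
    ∃ v : GLSV n k B a, glsC0 n k B a hk v = δ := by
  rcases Nat.lt_or_ge δ.val 2 with h | h
  · rcases Nat.lt_or_ge δ.val 1 with h0 | h1
    · exact ⟨⟨0, none⟩, by simp [glsC0, Fin.ext_iff]; omega⟩
    · refine ⟨⟨⟨1, by omega⟩, none⟩, ?_⟩
      have : (⟨1, by omega⟩ : Fin (n+1)) ≠ 0 := by simp [Fin.ext_iff]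
      simp [glsC0, this, Fin.ext_iff]; omega
  · refine ⟨⟨0, some (⟨0, by omega⟩, ⟨δ.val - 2, by omega⟩)⟩, ?_⟩
    simp [glsC0, Fin.ext_iff]
    omega

lemma update_class_sizes {V : Type*} [Fintype V] [DecidableEq V] {m : ℕ}
    (c : V → Fin m) (v₀ : V) (o : Fin m) (hne : c v₀ ≠ o) :
    (∀ δ, δ ≠ c v₀ → δ ≠ o →
      {w | Function.update c v₀ o w = δ}.ncard = {w | c w = δ}.ncard) ∧
    {w | Function.update c v₀ o w = o}.ncard = {w | c w = o}.ncard + 1 ∧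
    {w | Function.update c v₀ o w = c v₀}.ncard + 1 = {w | c w = c v₀}.ncard := by
  refine ⟨?_, ?_, ?_⟩
  · intro δ h1 h2
    congr 1
    ext w
    by_cases hw : w = v₀
    · subst hw
      simp [Function.update_self, h1.symm, h2.symm]
    · simp [Function.update_of_ne hw]
  · have hset : {w | Function.update c v₀ o w = o} = insert v₀ {w | c w = o} := by
      ext w
      by_cases hw : w = v₀
      · subst hw; simp [Function.update_self]
      · simp [Function.update_of_ne hw, hw]
    rw [hset, Set.ncard_insert_of_notMem (by simpa using hne)]
  · have hset : {w | Function.update c v₀ o w = c v₀} = {w | c w = c v₀} \ {v₀} := by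
      ext w
      by_cases hw : w = v₀
      · subst hw; simp [Function.update_self, Ne.symm hne]
      · simp [Function.update_of_ne hw, hw]
    rw [hset, Set.ncard_diff_singleton_add_one (by simp)]

lemma prod_two_change {m : ℕ} (f f' : Fin m → ℕ) (α o : Fin m) (hao : α ≠ o)
    (h1 : f' α + 1 = f α) (h2 : f' o = f o + 1)
    (h3 : ∀ δ, δ ≠ α → δ ≠ o → f' δ = f δ)
    (hpos : ∀ δ, 1 ≤ f δ) :
    ((∏ δ, f' δ) ≤ (∏ δ, f δ) → f α ≤ f o + 1) ∧
    (f α = f o + 1 → (∏ δ, f' δ) = (∏ δ, f δ)) := by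
  classical
  set R : ℕ := ∏ δ ∈ (Finset.univ.erase α).erase o, f δ with hR
  have hRpos : 0 < R := Finset.prod_pos fun δ _ => hpos δ
  have homem : o ∈ Finset.univ.erase α := Finset.mem_erase.mpr ⟨Ne.symm hao, Finset.mem_univ o⟩
  have hsplit : ∀ g : Fin m → ℕ, (∏ δ, g δ) =
      g α * g o * ∏ δ ∈ (Finset.univ.erase α).erase o, g δ := by
    intro g
    rw [mul_assoc, Finset.mul_prod_erase _ g homem,
      Finset.mul_prod_erase _ g (Finset.mem_univ α)]
  have hRR : (∏ δ ∈ (Finset.univ.erase α).erase o, f' δ) = R := by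
    refine Finset.prod_congr rfl fun δ hδ => ?_
    rw [Finset.mem_erase, Finset.mem_erase] at hδ
    exact h3 δ hδ.2.1 hδ.1
  have hKf : (∏ δ, f δ) = f α * f o * R := hsplit f
  have hKf' : (∏ δ, f' δ) = f' α * f' o * R := by rw [hsplit f', hRR]
  constructor
  · intro hle
    rw [hKf, hKf'] at hle
    have hle2 : f' α * f' o ≤ f α * f o := Nat.le_of_mul_le_mul_right hle hRpos
    rw [h2, ← h1] at hle2
    set x := f' α
    have e1 : x * (f o + 1) = x * f o + x := by ring
    have e2 : (x + 1) * f o = x * f o + f o := by ring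
    omega
  · intro heq
    rw [hKf, hKf']
    have : f' α * f' o = f α * f o := by
      rw [h2]
      have hx : f' α = f o := by omega
      rw [hx, heq]
      ring
    rw [this]


lemma gls_move {n k B : ℕ} {a : Fin n → ℕ} (c : GLSV n k B a → Fin (k+2))
    (hc : IsProperColoring (GLSGraph n k B a) c)
    (hmax : ∀ c' : GLSV n k B a → Fin (k+2), IsProperColoring (GLSGraph n k B a) c' →
      ∏ i : Fin (k+2), {v | c' v = i}.ncard ≤ ∏ i : Fin (k+2), {v | c v = i}.ncard)
    (hpos : ∀ δ : Fin (k+2), 1 ≤ {v | c v = δ}.ncard)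
    (t : Fin (n+1)) (cp : Fin (glsPar n B a t + 1)) (p : Fin k) (o : Fin (k+2))
    (ho1 : o ≠ c ⟨t, none⟩) (ho2 : ∀ q : Fin k, c ⟨t, some (cp, q)⟩ ≠ o) :
    {v | c v = c ⟨t, some (cp,p)⟩}.ncard ≤ {v | c v = o}.ncard + 1 ∧
    ({v | c v = c ⟨t, some (cp,p)⟩}.ncard = {v | c v = o}.ncard + 1 →
      ∃ c' : GLSV n k B a → Fin (k+2),
        IsProperColoring (GLSGraph n k B a) c' ∧
        (∀ c'' : GLSV n k B a → Fin (k+2), IsProperColoring (GLSGraph n k B a) c'' →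
          ∏ i : Fin (k+2), {v | c'' v = i}.ncard ≤ ∏ i : Fin (k+2), {v | c' v = i}.ncard) ∧
        c' ⟨0, none⟩ = c ⟨0, none⟩ ∧
        (∀ δ, δ ≠ c ⟨t, some (cp,p)⟩ → δ ≠ o →
          {v | c' v = δ}.ncard = {v | c v = δ}.ncard) ∧
        {v | c' v = o}.ncard = {v | c v = o}.ncard + 1 ∧
        {v | c' v = c ⟨t, some (cp,p)⟩}.ncard + 1 = {v | c v = c ⟨t, some (cp,p)⟩}.ncard) := by
  classical
  set v₀ : GLSV n k B a := ⟨t, some (cp, p)⟩ with hv₀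
  have hαo : c v₀ ≠ o := ho2 p
  set c' : GLSV n k B a → Fin (k+2) := Function.update c v₀ o with hc'def
  have hy0v : (⟨0, none⟩ : GLSV n k B a) ≠ v₀ := by
    intro h
    have := congrArg (fun x : GLSV n k B a => x.2.isSome) h
    simp [hv₀] at this
  have hc' : IsProperColoring (GLSGraph n k B a) c' := by
    intro u w hadj
    by_cases hu : u = v₀ <;> by_cases hw : w = v₀
    · subst hu; subst hw; exact absurd rfl hadj.ne
    · subst hu
      rw [hc'def]
      rw [Function.update_self, Function.update_of_ne hw]
      rcases adj_copy_cases hadj with h | ⟨q, _, hq⟩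
      · rw [h]; exact ho1
      · rw [hq]; exact Ne.symm (ho2 q)
    · subst hw
      rw [hc'def]
      rw [Function.update_self, Function.update_of_ne hu]
      rcases adj_copy_cases hadj.symm with h | ⟨q, _, hq⟩
      · rw [h]; exact Ne.symm ho1
      · rw [hq]; exact ho2 q
    · rw [hc'def, Function.update_of_ne hu, Function.update_of_ne hw]
      exact hc u w hadj
  obtain ⟨hsz1, hsz2, hsz3⟩ := update_class_sizes c v₀ o hαo
  obtain ⟨P1, P2⟩ := prod_two_change (fun δ => {v | c v = δ}.ncard)
    (fun δ => {v | c' v = δ}.ncard) (c v₀) o hαo hsz3 hsz2 hsz1 hpos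
  refine ⟨P1 (hmax c' hc'), fun heq => ⟨c', hc', ?_, ?_, hsz1, hsz2, hsz3⟩⟩
  · intro c'' h''
    exact (hmax c'' h'').trans_eq (P2 heq).symm
  · rw [hc'def, Function.update_of_ne hy0v]

lemma sum_class_sizes {W : Type*} [Fintype W] {m : ℕ} (c : W → Fin m) :
    ∑ δ : Fin m, {v | c v = δ}.ncard = Fintype.card W := by
  classical
  have h : ∀ δ, {v | c v = δ}.ncard = (Finset.univ.filter fun v => c v = δ).card := by
    intro δ
    rw [Set.ncard_eq_toFinset_card']
    congr 1
    ext v; simp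
  simp_rw [h]
  rw [← Finset.card_univ]
  exact (Finset.card_eq_sum_card_fiberwise (fun x _ => Finset.mem_univ (c x))).symm

lemma card_GLSV {n k B : ℕ} {a : Fin n → ℕ} (hsum : ∑ i, a i = k * B) :
    Fintype.card (GLSV n k B a) = (k+1) * (k*B + n + 1) := by
  classical
  rw [Fintype.card_sigma]
  simp only [Fintype.card_option, Fintype.card_prod, Fintype.card_fin]
  rw [Fin.sum_univ_succ]
  simp only [glsPar, Fin.cases_zero, Fin.cases_succ]
  have h2 : ∀ i : Fin n, (a i + 1) * k + 1 = a i * k + (k + 1) := by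
    intro i; ring
  have h3 : ∑ i : Fin n, ((a i + 1) * k + 1)
      = (∑ i, a i) * k + n * (k + 1) := by
    simp_rw [h2]
    rw [Finset.sum_add_distrib, ← Finset.sum_mul, Finset.sum_const, Finset.card_univ,
      Fintype.card_fin, smul_eq_mul]
  rw [h3, hsum]
  ring

lemma gls_alpha_lower {n k B : ℕ} {a : Fin n → ℕ} (hsum : ∑ i, a i = k * B)
    (c : GLSV n k B a → Fin (k+2)) (α : Fin (k+2)) (hy0 : c ⟨0, none⟩ = α)
    (hall : ∀ (t : Fin n) (cp : Fin (glsPar n B a t.succ + 1)),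
      ∃ q : Fin k, c ⟨t.succ, some (cp, q)⟩ = α) :
    k * B + n + 1 ≤ {v | c v = α}.ncard := by
  classical
  set ι : (Σ t : Fin n, Fin (glsPar n B a t.succ + 1)) → GLSV n k B a :=
    fun x => ⟨x.1.succ, some (x.2, (hall x.1 x.2).choose)⟩ with hι
  have hinj : Function.Injective ι := by
    rintro ⟨t1, cp1⟩ ⟨t2, cp2⟩ h
    simp only [hι] at h
    obtain ⟨h1, h2⟩ := Sigma.mk.inj_iff.mp h
    have ht : t1 = t2 := Fin.succ_injective _ h1
    subst ht
    have h2' := eq_of_heq h2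
    have hcp : cp1 = cp2 := (Prod.ext_iff.mp (Option.some_inj.mp h2')).1
    subst hcp
    rfl
  have hmem : ∀ x, ι x ∈ {v | c v = α} := fun x => (hall x.1 x.2).choose_spec
  have hy0not : (⟨0, none⟩ : GLSV n k B a) ∉ Finset.image ι Finset.univ := by
    rw [Finset.mem_image]
    rintro ⟨x, -, hx⟩
    have := congrArg (fun z : GLSV n k B a => z.2.isSome) hx
    simp [hι] at this
  have hsub : insert (⟨0, none⟩ : GLSV n k B a) (Finset.image ι Finset.univ)
      ⊆ {v | c v = α}.toFinset := by
    intro v hv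
    rw [Finset.mem_insert] at hv
    rcases hv with rfl | hv
    · simpa using hy0
    · obtain ⟨x, -, rfl⟩ := Finset.mem_image.mp hv
      simpa using hmem x
  have hcard := Finset.card_le_card hsub
  rw [Finset.card_insert_of_notMem hy0not,
    Finset.card_image_of_injective _ hinj] at hcard
  have hcardD : (Finset.univ : Finset (Σ t : Fin n, Fin (glsPar n B a t.succ + 1))).card
      = k * B + n := by
    rw [Finset.card_univ, Fintype.card_sigma]
    simp only [Fintype.card_fin]
    have : ∀ i : Fin n, glsPar n B a i.succ + 1 = a i + 1 := by
      intro i; simp [glsPar]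
    simp_rw [this]
    rw [Finset.sum_add_distrib, hsum, Finset.sum_const, Finset.card_univ,
      Fintype.card_fin, smul_eq_mul, mul_one]
  rw [Set.ncard_eq_toFinset_card']
  omega

lemma copy_color_ne_center {n k B : ℕ} {a : Fin n → ℕ}
    {c : GLSV n k B a → Fin (k+2)} (hc : IsProperColoring (GLSGraph n k B a) c)
    (t : Fin (n+1)) (cp : Fin (glsPar n B a t + 1)) (q : Fin k) :
    c ⟨t, some (cp, q)⟩ ≠ c ⟨t, none⟩ :=
  (hc _ _ (adj_y_copy t (cp, q))).symm

lemma exists_missing_color {n k B : ℕ} {a : Fin n → ℕ}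
    {c : GLSV n k B a → Fin (k+2)}
    (t : Fin (n+1)) (cp : Fin (glsPar n B a t + 1)) :
    ∃ o : Fin (k+2), o ≠ c ⟨t, none⟩ ∧ ∀ q : Fin k, c ⟨t, some (cp, q)⟩ ≠ o := by
  classical
  set F : Finset (Fin (k+2)) :=
    insert (c ⟨t, none⟩) (Finset.image (fun q : Fin k => c ⟨t, some (cp, q)⟩) Finset.univ)
    with hF
  have hcard : F.card ≤ k + 1 := by
    refine (Finset.card_insert_le _ _).trans ?_
    have := Finset.card_image_le (s := (Finset.univ : Finset (Fin k)))
      (f := fun q : Fin k => c ⟨t, some (cp, q)⟩)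
    simp only [Finset.card_univ, Fintype.card_fin] at this
    omega
  have : ∃ o : Fin (k+2), o ∉ F := by
    by_contra h
    push_neg at h
    have hsub : (Finset.univ : Finset (Fin (k+2))) ⊆ F := fun o _ => h o
    have := Finset.card_le_card hsub
    simp only [Finset.card_univ, Fintype.card_fin] at this
    omega
  obtain ⟨o, ho⟩ := this
  rw [hF, Finset.mem_insert] at ho
  push_neg at ho
  refine ⟨o, ho.1, fun q hq => ?_⟩
  exact ho.2 (Finset.mem_image.mpr ⟨q, Finset.mem_univ q, hq⟩)

lemma copy_colors_cover {n k B : ℕ} {a : Fin n → ℕ}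
    {c : GLSV n k B a → Fin (k+2)} (hc : IsProperColoring (GLSGraph n k B a) c)
    (t : Fin (n+1)) (cp : Fin (glsPar n B a t + 1)) {α : Fin (k+2)}
    (hcp : ∀ q : Fin k, c ⟨t, some (cp, q)⟩ ≠ α)
    (hαγ : α ≠ c ⟨t, none⟩) (δ : Fin (k+2)) (hδα : δ ≠ α)
    (hδγ : δ ≠ c ⟨t, none⟩) : ∃ q : Fin k, c ⟨t, some (cp, q)⟩ = δ := by
  classical
  set f : Fin k → Fin (k+2) := fun q => c ⟨t, some (cp, q)⟩ with hf
  have hinj : Function.Injective f := by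
    intro q q' h
    by_contra hne
    exact hc _ _ (adj_same_copy t cp hne) h
  set T : Finset (Fin (k+2)) := Finset.univ \ {α, c ⟨t, none⟩} with hT
  have hsub : Finset.image f Finset.univ ⊆ T := by
    intro x hx
    obtain ⟨q, -, rfl⟩ := Finset.mem_image.mp hx
    rw [hT]
    simp only [Finset.mem_sdiff, Finset.mem_univ, true_and, Finset.mem_insert,
      Finset.mem_singleton]
    push_neg
    exact ⟨hcp q, copy_color_ne_center hc t cp q⟩
  have hTcard : T.card = k := by
    rw [hT, Finset.card_sdiff_of_subset (by simp)]
    have h2 : ({α, c ⟨t, none⟩} : Finset (Fin (k+2))).card = 2 := by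
      rw [Finset.card_insert_of_notMem (by simpa using hαγ), Finset.card_singleton]
    simp [h2]
  have himcard : (Finset.image f Finset.univ).card = k := by
    rw [Finset.card_image_of_injective _ hinj, Finset.card_univ, Fintype.card_fin]
  have heq : Finset.image f Finset.univ = T :=
    Finset.eq_of_subset_of_card_le hsub (by omega)
  have hδT : δ ∈ T := by
    rw [hT]
    simp only [Finset.mem_sdiff, Finset.mem_univ, true_and, Finset.mem_insert,
      Finset.mem_singleton]
    push_neg
    exact ⟨hδα, hδγ⟩
  rw [← heq] at hδT
  obtain ⟨q, -, hq⟩ := Finset.mem_image.mp hδT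
  exact ⟨q, hq⟩


end Helpers

theorem gls_star_alternating_components (n k B : ℕ) (hn : 1 ≤ n) (hk : 1 ≤ k)
    (hkn : k ≤ n) (hB : 1 ≤ B) (a : Fin n → ℕ) (ha : ∀ i, 1 ≤ a i ∧ a i ≤ B)
    (hsum : ∑ i, a i = k * B)
    (hnoneq : ∀ c : GLSV n k B a → Fin (k + 2),
      IsProperColoring (GLSGraph n k B a) c →
      (∀ c' : GLSV n k B a → Fin (k + 2), IsProperColoring (GLSGraph n k B a) c' →
        ∏ i : Fin (k + 2), {v | c' v = i}.ncard ≤ ∏ i : Fin (k + 2), {v | c v = i}.ncard) →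
      ¬ IsEquitableColoring (GLSGraph n k B a) c) :
    ∃ c : GLSV n k B a → Fin (k + 2),
      IsProperColoring (GLSGraph n k B a) c ∧
      (∀ c' : GLSV n k B a → Fin (k + 2), IsProperColoring (GLSGraph n k B a) c' →
        ∏ i : Fin (k + 2), {v | c' v = i}.ncard ≤ ∏ i : Fin (k + 2), {v | c v = i}.ncard) ∧
      ∃ i j : Fin (k + 2),
        {v | c v = j}.ncard + 2 ≤ {v | c v = i}.ncard ∧
        IsDisjointUnionOfStars
          ((GLSGraph n k B a).induce {v | c v = i ∨ c v = j}) := by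
  classical
  obtain ⟨c, hcmem, hcmax'⟩ := Finset.exists_max_image
    ((Finset.univ : Finset (GLSV n k B a → Fin (k+2))).filter
      fun c => IsProperColoring (GLSGraph n k B a) c)
    (fun c => ∏ i : Fin (k+2), {v | c v = i}.ncard)
    ⟨glsC0 n k B a hk, Finset.mem_filter.mpr ⟨Finset.mem_univ _, glsC0_proper hk⟩⟩
  have hc : IsProperColoring (GLSGraph n k B a) c := (Finset.mem_filter.mp hcmem).2
  have hmax : ∀ c' : GLSV n k B a → Fin (k+2), IsProperColoring (GLSGraph n k B a) c' →
      (∏ i : Fin (k+2), {v | c' v = i}.ncard) ≤ ∏ i : Fin (k+2), {v | c v = i}.ncard :=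
    fun c' h' => hcmax' c' (Finset.mem_filter.mpr ⟨Finset.mem_univ _, h'⟩)
  have hpos : ∀ δ : Fin (k+2), 1 ≤ {v | c v = δ}.ncard := by
    intro δ
    by_contra hcon
    have h0 : {v | c v = δ}.ncard = 0 := by omega
    have hzero : (∏ i : Fin (k+2), {v | c v = i}.ncard) = 0 :=
      Finset.prod_eq_zero (Finset.mem_univ δ) h0
    have h1 : 1 ≤ ∏ i : Fin (k+2), {v | glsC0 n k B a hk v = i}.ncard := by
      refine Finset.one_le_prod' fun i _ => ?_
      obtain ⟨v, hv⟩ := glsC0_classes_nonempty (a := a) (B := B) hn hk i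
      have hfin : ({v | glsC0 n k B a hk v = i}).Finite := Set.toFinite _
      have := (Set.ncard_pos hfin).mpr ⟨v, hv⟩
      omega
    have := hmax (glsC0 n k B a hk) (glsC0_proper hk)
    omega
  have hne : ¬ (∀ i j : Fin (k+2), {v | c v = i}.ncard ≤ {v | c v = j}.ncard + 1) :=
    fun hforall => hnoneq c hc hmax ⟨hc, hforall⟩
  push_neg at hne
  obtain ⟨i0, j0, hij0⟩ := hne
  have hij0' : {v | c v = j0}.ncard + 2 ≤ {v | c v = i0}.ncard := by omega
  by_cases hsafe : ∃ i j : Fin (k+2), c ⟨0, none⟩ ≠ i ∧ c ⟨0, none⟩ ≠ j ∧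
      {v | c v = j}.ncard + 2 ≤ {v | c v = i}.ncard
  · obtain ⟨i, j, h1, h2, h3⟩ := hsafe
    exact ⟨c, hc, hmax, i, j, h3, gls_stars c hc i j h1 h2⟩
  push_neg at hsafe
  by_cases hcaseA : c ⟨0, none⟩ = i0
  · -- Case A : the colour of y₀ is the big colour
    have hj0α : c ⟨0, none⟩ ≠ j0 := by
      intro h
      have hii : i0 = j0 := hcaseA.symm.trans h
      rw [hii] at hij0'
      omega
    rw [← hcaseA] at hij0'
    have h2lt : 1 < {v | c v = c ⟨0, none⟩}.ncard := by omega
    obtain ⟨v, hvmem, hvne⟩ := Set.exists_ne_of_one_lt_ncard h2lt ⟨0, none⟩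
    obtain ⟨t, o⟩ := v
    rcases o with _ | ⟨cp, p⟩
    · exfalso
      have ht : t ≠ 0 := by
        intro h; subst h; exact hvne rfl
      exact (hc _ _ (adj_y0_y t ht)) (Set.mem_setOf_eq ▸ hvmem).symm
    · have hvα : c ⟨t, some (cp, p)⟩ = c ⟨0, none⟩ := hvmem
      obtain ⟨o, ho1, ho2⟩ := exists_missing_color (c := c) t cp
      have hmv := gls_move c hc hmax hpos t cp p o ho1 ho2
      rw [hvα] at hmv
      obtain ⟨hle, htrig⟩ := hmv
      have hoα : o ≠ c ⟨0, none⟩ := by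
        intro h; exact ho2 p (hvα.trans h.symm)
      have hsafe1 : {v | c v = o}.ncard < {v | c v = j0}.ncard + 2 :=
        hsafe o j0 (Ne.symm hoα) hj0α
      have heq1 : {v | c v = c ⟨0, none⟩}.ncard = {v | c v = o}.ncard + 1 := by omega
      obtain ⟨c', hc'p, hc'max, hc'y0, hc'sz, hc'szo, hc'szα⟩ := htrig heq1
      have hj0o : j0 ≠ o := by
        intro h; rw [h] at hij0'; omega
      have hj0α' : j0 ≠ c ⟨0, none⟩ := fun h => hj0α h.symm
      refine ⟨c', hc'p, hc'max, o, j0, ?_, gls_stars c' hc'p o j0 ?_ ?_⟩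
      · rw [hc'szo, hc'sz j0 hj0α' hj0o]
        omega
      · rw [hc'y0]; exact Ne.symm hoα
      · rw [hc'y0]; exact hj0α
  · -- Case B : the colour of y₀ is the small colour
    have hcaseB : c ⟨0, none⟩ = j0 := by
      by_contra h
      have := hsafe i0 j0 hcaseA h
      omega
    rw [← hcaseB] at hij0'
    by_cases hBi : ∃ (t : Fin n) (cp : Fin (glsPar n B a t.succ + 1)),
        ∀ q : Fin k, c ⟨t.succ, some (cp, q)⟩ ≠ c ⟨0, none⟩
    · obtain ⟨t, cp, hcp⟩ := hBi
      have hT0 : (t.succ : Fin (n+1)) ≠ 0 := Fin.succ_ne_zero t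
      have hγα : c ⟨0, none⟩ ≠ c ⟨t.succ, none⟩ := hc _ _ (adj_y0_y t.succ hT0)
      have hδex : ∃ δ : Fin (k+2), δ ≠ c ⟨0, none⟩ ∧ δ ≠ c ⟨t.succ, none⟩ ∧
          {v | c v = c ⟨0, none⟩}.ncard + 1 ≤ {v | c v = δ}.ncard := by
        by_cases hpγ : i0 ≠ c ⟨t.succ, none⟩
        · exact ⟨i0, fun h => hcaseA h.symm, hpγ, by omega⟩
        · have : ∃ δ : Fin (k+2),
              δ ∉ ({c ⟨0, none⟩, c ⟨t.succ, none⟩} : Finset (Fin (k+2))) := by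
            by_contra hcon
            push_neg at hcon
            have hsub : (Finset.univ : Finset (Fin (k+2))) ⊆
                {c ⟨0, none⟩, c ⟨t.succ, none⟩} := fun x _ => hcon x
            have h1 := Finset.card_le_card hsub
            have h2 : ({c ⟨0, none⟩, c ⟨t.succ, none⟩} : Finset (Fin (k+2))).card ≤ 2 :=
              (Finset.card_insert_le _ _).trans (by simp)
            simp only [Finset.card_univ, Fintype.card_fin] at h1
            omega
          obtain ⟨δ, hδ⟩ := this
          simp only [Finset.mem_insert, Finset.mem_singleton] at hδ
          push_neg at hδ
          have hb := hsafe i0 δ hcaseA (Ne.symm hδ.1)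
          exact ⟨δ, hδ.1, hδ.2, by omega⟩
      obtain ⟨δ, hδα, hδγ, hδge⟩ := hδex
      obtain ⟨q, hq⟩ := copy_colors_cover hc t.succ cp hcp hγα δ hδα hδγ
      have hmv := gls_move c hc hmax hpos t.succ cp q (c ⟨0, none⟩) hγα hcp
      rw [hq] at hmv
      obtain ⟨hle, htrig⟩ := hmv
      have heq1 : {v | c v = δ}.ncard = {v | c v = c ⟨0, none⟩}.ncard + 1 := by omega
      obtain ⟨c', hc'p, hc'max, hc'y0, hc'sz, hc'szα, hc'szδ⟩ := htrig heq1
      have hi0δ : i0 ≠ δ := by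
        intro h; rw [← h] at heq1; omega
      refine ⟨c', hc'p, hc'max, i0, δ, ?_, gls_stars c' hc'p i0 δ ?_ ?_⟩
      · rw [hc'sz i0 hi0δ (Ne.symm hcaseA)]
        omega
      · rw [hc'y0]; exact hcaseA
      · rw [hc'y0]; exact fun h => hδα h.symm
    · exfalso
      push_neg at hBi
      have hlow := gls_alpha_lower hsum c (c ⟨0, none⟩) rfl hBi
      have hsumsz := sum_class_sizes c
      rw [card_GLSV hsum] at hsumsz
      have hbound : ∀ q' : Fin (k+2), q' ≠ c ⟨0, none⟩ →
          {v | c v = c ⟨0, none⟩}.ncard + 1 ≤ {v | c v = q'}.ncard := by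
        intro q' hq'
        by_cases hq'i : q' = i0
        · subst hq'i; omega
        · have := hsafe i0 q' hcaseA (Ne.symm hq')
          omega
      have hsplit : (∑ δ : Fin (k+2), {v | c v = δ}.ncard) =
          {v | c v = c ⟨0, none⟩}.ncard +
            ∑ δ ∈ Finset.univ.erase (c ⟨0, none⟩), {v | c v = δ}.ncard :=
        (Finset.add_sum_erase _ _ (Finset.mem_univ _)).symm
      have hcarde : (Finset.univ.erase (c ⟨0, none⟩)).card = k + 1 := by
        rw [Finset.card_erase_of_mem (Finset.mem_univ _), Finset.card_univ,
          Fintype.card_fin]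
        omega
      have hge : (k+1) * ({v | c v = c ⟨0, none⟩}.ncard + 1) ≤
          ∑ δ ∈ Finset.univ.erase (c ⟨0, none⟩), {v | c v = δ}.ncard := by
        have := Finset.card_nsmul_le_sum (Finset.univ.erase (c ⟨0, none⟩))
          (fun δ => {v | c v = δ}.ncard) ({v | c v = c ⟨0, none⟩}.ncard + 1)
          (fun δ hδ => hbound δ (Finset.mem_erase.mp hδ).1)
        rwa [hcarde, smul_eq_mul] at this
      have hmono : (k+1) * (k*B + n + 1 + 1) ≤
          (k+1) * ({v | c v = c ⟨0, none⟩}.ncard + 1) :=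
        Nat.mul_le_mul_left _ (by omega)
      have hexp : (k+1) * (k*B + n + 1 + 1) = (k+1) * (k*B + n + 1) + (k+1) := by ring
      linarith



end BlockGraphPaper
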